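/- As α → 0, the entropy of the log-skew-normal LSN(μ, σ², α) converges to the entropy of the log-normal LN(μ, σ²), namely H_{N(μ,σ²)} + μ. -/

import Mathlib

open MeasureTheory Real Filter

noncomputable def stdphi (x : ℝ) : ℝ := (Real.sqrt (2 * Real.pi))⁻¹ * Real.exp (-(x ^ 2) / 2)

noncomputable def stdPhi (x : ℝ) : ℝ := ∫ t in Set.Iic x, stdphi t

/-- The log-skew-normal density `LSN(μ, σ², α)`. -/
noncomputable def lsnpdf (μ σ α : ℝ) (y : ℝ) : ℝ :=
  if 0 < y then
    (2 / (σ * y)) * stdphi ((Real.log y - μ) / σ) * stdPhi (α * ((Real.log y - μ) / σ))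
  else 0

section Aux

lemma sqrt2pi_pos : 0 < Real.sqrt (2 * Real.pi) := Real.sqrt_pos.2 (by positivity)

lemma one_le_sqrt2pi : 1 ≤ Real.sqrt (2 * Real.pi) := by
  rw [show (1:ℝ) = Real.sqrt 1 by simp]
  exact Real.sqrt_le_sqrt (by nlinarith [Real.pi_gt_three])

lemma log_sqrt2pi_nonneg : 0 ≤ Real.log (Real.sqrt (2 * Real.pi)) :=
  Real.log_nonneg one_le_sqrt2pi

lemma stdphi_pos (x : ℝ) : 0 < stdphi x := by
  unfold stdphi; positivity

lemma stdphi_eq (x : ℝ) : stdphi x = (Real.sqrt (2 * Real.pi))⁻¹ * Real.exp (-(1/2) * x ^ 2) := by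
  unfold stdphi; ring_nf

lemma continuous_stdphi : Continuous stdphi := by
  unfold stdphi
  fun_prop

lemma integrable_stdphi : Integrable stdphi := by
  have : stdphi = fun x => (Real.sqrt (2 * Real.pi))⁻¹ * Real.exp (-(1/2) * x ^ 2) := by
    funext x; exact stdphi_eq x
  rw [this]
  exact (integrable_exp_neg_mul_sq (by norm_num)).const_mul _

lemma integral_stdphi : ∫ x, stdphi x = 1 := by
  have : stdphi = fun x => (Real.sqrt (2 * Real.pi))⁻¹ * Real.exp (-(1/2) * x ^ 2) := by
    funext x; exact stdphi_eq x
  rw [this, MeasureTheory.integral_const_mul, integral_gaussian]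
  rw [show (π / (1/2) : ℝ) = 2 * π by ring]
  exact inv_mul_cancel₀ (ne_of_gt sqrt2pi_pos)

lemma log_stdphi (x : ℝ) : Real.log (stdphi x) = -Real.log (Real.sqrt (2 * Real.pi)) - x ^ 2 / 2 := by
  unfold stdphi
  rw [Real.log_mul (by positivity) (Real.exp_ne_zero _), Real.log_inv, Real.log_exp]
  ring

lemma integrable_id_mul_gauss : Integrable (fun x : ℝ => x * Real.exp (-(1/2) * x ^ 2)) :=
  integrable_mul_exp_neg_mul_sq (by norm_num)

lemma gauss_sq_bound (x : ℝ) : x ^ 2 * Real.exp (-(1/2) * x ^ 2) ≤ 4 * Real.exp (-(1/4) * x ^ 2) := by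
  have h1 : x ^ 2 / 4 ≤ Real.exp (x ^ 2 / 4) := (Real.add_one_le_exp _).trans' (by nlinarith)
  have h2 : Real.exp (-(1/2) * x ^ 2) = Real.exp (-(1/4) * x ^ 2) / Real.exp (x^2/4) := by
    rw [← Real.exp_sub]; ring_nf
  rw [h2]
  rw [div_eq_mul_inv]
  have h3 : x ^ 2 * (Real.exp (-(1/4) * x ^ 2) * (Real.exp (x^2/4))⁻¹)
      = (x ^ 2 * (Real.exp (x^2/4))⁻¹) * Real.exp (-(1/4) * x ^ 2) := by ring
  rw [h3]
  have h4 : x ^ 2 * (Real.exp (x^2/4))⁻¹ ≤ 4 := by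
    rw [mul_inv_le_iff₀ (Real.exp_pos _)]
    nlinarith [Real.exp_pos (x^2/4)]
  exact mul_le_mul_of_nonneg_right h4 (Real.exp_pos _).le

lemma integrable_sq_mul_gauss : Integrable (fun x : ℝ => x ^ 2 * Real.exp (-(1/2) * x ^ 2)) := by
  refine Integrable.mono' ((integrable_exp_neg_mul_sq (b := 1/4) (by norm_num)).const_mul 4)
    ((continuous_pow 2).mul (by fun_prop)).aestronglyMeasurable ?_
  filter_upwards with x
  rw [Real.norm_eq_abs, abs_of_nonneg (by positivity)]
  exact gauss_sq_bound x

lemma integral_id_mul_gauss : ∫ x : ℝ, x * Real.exp (-(1/2) * x ^ 2) = 0 := by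
  have hd : ∀ x : ℝ, HasDerivAt (fun x : ℝ => -Real.exp (-(1/2) * x ^ 2))
      (x * Real.exp (-(1/2) * x ^ 2)) x := by
    intro x
    have h1 : HasDerivAt (fun x : ℝ => -(1/2) * x ^ 2) (-(1/2) * (2 * x)) x := by
      simpa using ((hasDerivAt_pow 2 x).const_mul (-(1/2) : ℝ))
    have h2 := (h1.exp).neg
    convert h2 using 1
    · rfl
    · rfl
    · rfl
    · ring
  exact integral_eq_zero_of_hasDerivAt_of_integrable hd integrable_id_mul_gauss
    (integrable_exp_neg_mul_sq (by norm_num)).neg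

lemma integral_sq_mul_gauss :
    ∫ x : ℝ, x ^ 2 * Real.exp (-(1/2) * x ^ 2) = Real.sqrt (2 * π) := by
  have hd : ∀ x : ℝ, HasDerivAt (fun x : ℝ => -(x * Real.exp (-(1/2) * x ^ 2)))
      (x ^ 2 * Real.exp (-(1/2) * x ^ 2) - Real.exp (-(1/2) * x ^ 2)) x := by
    intro x
    have h1 : HasDerivAt (fun x : ℝ => -(1/2) * x ^ 2) (-(1/2) * (2 * x)) x := by
      simpa using ((hasDerivAt_pow 2 x).const_mul (-(1/2) : ℝ))
    have h2 := ((hasDerivAt_id x).mul h1.exp).neg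
    convert h2 using 1
    · rfl
    · rfl
    · rfl
    · simp only [id]; ring
  have hint : Integrable (fun x : ℝ => x ^ 2 * Real.exp (-(1/2) * x ^ 2)
      - Real.exp (-(1/2) * x ^ 2)) :=
    integrable_sq_mul_gauss.sub (integrable_exp_neg_mul_sq (by norm_num))
  have h0 := integral_eq_zero_of_hasDerivAt_of_integrable hd hint integrable_id_mul_gauss.neg
  have hsub := integral_sub integrable_sq_mul_gauss
    (integrable_exp_neg_mul_sq (b := 1/2) (by norm_num))
  rw [hsub] at h0
  have hg : ∫ x : ℝ, Real.exp (-(1/2) * x ^ 2) = Real.sqrt (2 * π) := by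
    rw [integral_gaussian, show (π / (1/2) : ℝ) = 2 * π by ring]
  linarith

lemma integrable_id_mul_stdphi : Integrable (fun x : ℝ => x * stdphi x) := by
  have : (fun x : ℝ => x * stdphi x)
      = fun x : ℝ => (Real.sqrt (2 * Real.pi))⁻¹ * (x * Real.exp (-(1/2) * x ^ 2)) := by
    funext x; rw [stdphi_eq]; ring
  rw [this]
  exact integrable_id_mul_gauss.const_mul _

lemma integrable_sq_mul_stdphi : Integrable (fun x : ℝ => x ^ 2 * stdphi x) := by
  have : (fun x : ℝ => x ^ 2 * stdphi x)
      = fun x : ℝ => (Real.sqrt (2 * Real.pi))⁻¹ * (x ^ 2 * Real.exp (-(1/2) * x ^ 2)) := by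
    funext x; rw [stdphi_eq]; ring
  rw [this]
  exact integrable_sq_mul_gauss.const_mul _

lemma integral_id_mul_stdphi : ∫ x : ℝ, x * stdphi x = 0 := by
  have : (fun x : ℝ => x * stdphi x)
      = fun x : ℝ => (Real.sqrt (2 * Real.pi))⁻¹ * (x * Real.exp (-(1/2) * x ^ 2)) := by
    funext x; rw [stdphi_eq]; ring
  rw [this, MeasureTheory.integral_const_mul, integral_id_mul_gauss, mul_zero]

lemma integral_sq_mul_stdphi : ∫ x : ℝ, x ^ 2 * stdphi x = 1 := by
  have : (fun x : ℝ => x ^ 2 * stdphi x)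
      = fun x : ℝ => (Real.sqrt (2 * Real.pi))⁻¹ * (x ^ 2 * Real.exp (-(1/2) * x ^ 2)) := by
    funext x; rw [stdphi_eq]; ring
  rw [this, MeasureTheory.integral_const_mul, integral_sq_mul_gauss]
  exact inv_mul_cancel₀ (ne_of_gt sqrt2pi_pos)

lemma stdPhi_le_one (x : ℝ) : stdPhi x ≤ 1 := by
  rw [← integral_stdphi]
  exact setIntegral_le_integral integrable_stdphi
    (Eventually.of_forall fun t => (stdphi_pos t).le)

lemma stdPhi_lower (x : ℝ) :
    (Real.sqrt (2 * Real.pi))⁻¹ * Real.exp (-((|x| + 1) ^ 2) / 2) ≤ stdPhi x := by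
  have hsub : Set.Ioc (x - 1) x ⊆ Set.Iic x := Set.Ioc_subset_Iic_self
  have h1 : ∫ _ in Set.Ioc (x-1) x, ((Real.sqrt (2 * Real.pi))⁻¹ * Real.exp (-((|x| + 1) ^ 2) / 2))
      ≤ ∫ t in Set.Ioc (x-1) x, stdphi t := by
    refine setIntegral_mono_on (integrableOn_const (by simp))
      (integrable_stdphi.integrableOn) measurableSet_Ioc ?_
    intro t ht
    unfold stdphi
    have habs : |t| ≤ |x| + 1 := by
      rw [abs_le]
      constructor
      · have := ht.1; have := neg_abs_le x; linarith
      · have := ht.2; have := le_abs_self x; linarith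
    have ht2 : t ^ 2 ≤ (|x| + 1) ^ 2 := by
      have := abs_nonneg t; nlinarith [sq_abs t]
    exact mul_le_mul_of_nonneg_left (Real.exp_le_exp.2 (by linarith)) (by positivity)
  have h2 : ∫ _ in Set.Ioc (x-1) x, ((Real.sqrt (2 * Real.pi))⁻¹ * Real.exp (-((|x| + 1) ^ 2) / 2))
      = (Real.sqrt (2 * Real.pi))⁻¹ * Real.exp (-((|x| + 1) ^ 2) / 2) := by
    rw [setIntegral_const]
    rw [Real.volume_real_Ioc, show x - (x - 1) = 1 by ring]
    simp
  have h3 : ∫ t in Set.Ioc (x-1) x, stdphi t ≤ stdPhi x := by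
    exact setIntegral_mono_set integrable_stdphi.integrableOn
      (Eventually.of_forall fun t => (stdphi_pos t).le) (HasSubset.Subset.eventuallyLE hsub)
  rw [h2] at h1
  exact h1.trans h3

lemma stdPhi_pos (x : ℝ) : 0 < stdPhi x :=
  lt_of_lt_of_le (by positivity) (stdPhi_lower x)

lemma neg_log_stdPhi_le (x : ℝ) :
    -Real.log (stdPhi x) ≤ Real.log (Real.sqrt (2 * Real.pi)) + (|x| + 1) ^ 2 / 2 := by
  have h1 : Real.log ((Real.sqrt (2 * Real.pi))⁻¹ * Real.exp (-((|x| + 1) ^ 2) / 2))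
      ≤ Real.log (stdPhi x) :=
    Real.log_le_log (by positivity) (stdPhi_lower x)
  rw [Real.log_mul (by positivity) (Real.exp_ne_zero _), Real.log_inv, Real.log_exp] at h1
  linarith

lemma continuous_stdPhi : Continuous stdPhi := by
  have : stdPhi = fun x => stdPhi 0 + ∫ t in (0:ℝ)..x, stdphi t := by
    funext x
    rw [← intervalIntegral.integral_Iic_sub_Iic integrable_stdphi.integrableOn
      integrable_stdphi.integrableOn]
    unfold stdPhi; ring
  rw [this]
  exact continuous_const.add (integrable_stdphi.continuous_primitive 0)

lemma stdphi_neg (x : ℝ) : stdphi (-x) = stdphi x := by unfold stdphi; ring_nf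

lemma stdPhi_zero : stdPhi 0 = 1/2 := by
  have h1 : ∫ x in Set.Iic (0:ℝ), stdphi (-x) = ∫ x in Set.Ioi (-(0:ℝ)), stdphi x :=
    integral_comp_neg_Iic 0 stdphi
  simp only [stdphi_neg, neg_zero] at h1
  have h2 : (∫ x in Set.Iic (0:ℝ), stdphi x) + ∫ x in Set.Ioi (0:ℝ), stdphi x = 1 := by
    rw [intervalIntegral.integral_Iic_add_Ioi integrable_stdphi.integrableOn
      integrable_stdphi.integrableOn]
    exact integral_stdphi
  unfold stdPhi
  rw [← h1] at h2
  linarith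

lemma integral_log_subst (g : ℝ → ℝ) :
    ∫ y : ℝ, (if 0 < y then g (Real.log y) / y else 0) = ∫ x : ℝ, g x := by
  have h0 : ∫ y : ℝ, (if 0 < y then g (Real.log y) / y else 0)
      = ∫ y in Set.Ioi (0:ℝ), (if 0 < y then g (Real.log y) / y else 0) := by
    rw [setIntegral_eq_integral_of_forall_compl_eq_zero]
    intro y hy
    simp only [Set.mem_Ioi, not_lt] at hy
    rw [if_neg (not_lt.2 hy)]
  have himg : Set.Ioi (0:ℝ) = Real.exp '' Set.univ := by
    rw [Set.image_univ, Real.range_exp]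
  have h1 : ∫ y in Set.Ioi (0:ℝ), (if 0 < y then g (Real.log y) / y else 0)
      = ∫ x in Set.univ,
          |Real.exp x| • (if 0 < Real.exp x then g (Real.log (Real.exp x)) / Real.exp x else 0) := by
    rw [himg]
    exact integral_image_eq_integral_abs_deriv_smul MeasurableSet.univ
      (fun x _ => (Real.hasDerivAt_exp x).hasDerivWithinAt)
      (Real.exp_injective.injOn) _
  rw [h0, h1, setIntegral_univ]
  congr 1
  funext x
  rw [if_pos (Real.exp_pos x), Real.log_exp, abs_of_pos (Real.exp_pos x), smul_eq_mul]
  field_simp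

lemma integral_affine_subst (g : ℝ → ℝ) (μ σ : ℝ) (hσ : 0 < σ) :
    ∫ x : ℝ, g ((x - μ) / σ) = σ * ∫ x : ℝ, g x := by
  have h1 : ∫ x : ℝ, g ((x - μ) / σ) = ∫ x : ℝ, g (x / σ) :=
    integral_sub_right_eq_self (fun x => g (x / σ)) μ
  rw [h1]
  have h2 : (fun x : ℝ => g (x / σ)) = fun x : ℝ => g (σ⁻¹ * x) := by
    funext x; rw [div_eq_inv_mul]
  rw [h2, Measure.integral_comp_mul_left g σ⁻¹, inv_inv, abs_of_pos hσ, smul_eq_mul]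

/-- The transformed integrand after substituting `y = exp (μ + σ t)`. -/
noncomputable def hfun (μ σ α t : ℝ) : ℝ :=
  2 / σ * stdphi t * stdPhi (α * t) *
    (Real.log 2 - Real.log σ - (μ + σ * t) + Real.log (stdphi t) + Real.log (stdPhi (α * t)))

lemma lsn_eq (μ σ : ℝ) (hσ : 0 < σ) (α : ℝ) (y : ℝ) :
    lsnpdf μ σ α y * Real.log (lsnpdf μ σ α y) =
      if 0 < y then hfun μ σ α ((Real.log y - μ) / σ) / y else 0 := by
  by_cases hy : 0 < y
  · rw [if_pos hy]
    unfold lsnpdf hfun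
    rw [if_pos hy]
    set t := (Real.log y - μ) / σ with ht
    have hφ := stdphi_pos t
    have hΦ := stdPhi_pos (α * t)
    have hμσt : μ + σ * t = Real.log y := by rw [ht]; field_simp; ring
    rw [Real.log_mul (mul_ne_zero (by positivity) hφ.ne') hΦ.ne',
        Real.log_mul (by positivity) hφ.ne',
        Real.log_div two_ne_zero (by positivity),
        Real.log_mul hσ.ne' hy.ne']
    rw [hμσt]
    field_simp
    ring
  · rw [if_neg hy]
    unfold lsnpdf
    rw [if_neg hy]
    simp

lemma continuous_hfun (μ σ α : ℝ) : Continuous (fun t => hfun μ σ α t) := by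
  unfold hfun
  have hΦ : Continuous fun t : ℝ => stdPhi (α * t) :=
    continuous_stdPhi.comp (continuous_const.mul continuous_id)
  have hlogφ : Continuous fun t : ℝ => Real.log (stdphi t) :=
    continuous_stdphi.log fun t => (stdphi_pos t).ne'
  have hlogΦ : Continuous fun t : ℝ => Real.log (stdPhi (α * t)) :=
    hΦ.log fun t => (stdPhi_pos (α * t)).ne'
  exact ((continuous_const.mul continuous_stdphi).mul hΦ).mul
    ((((continuous_const.sub (continuous_const.add (continuous_const.mul continuous_id))).add
      hlogφ)).add hlogΦ)

end Aux

set_option maxHeartbeats 2000000 in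
/-- As `α → 0`, the entropy of `LSN(μ, σ², α)` converges to the entropy of `LN(μ, σ²)`, namely
`H_{N(μ,σ²)} + μ`. -/
theorem entropy_log_skew_normal_tendsto_zero (μ σ : ℝ) (hσ : 0 < σ) :
    Tendsto (fun α : ℝ => -∫ y, lsnpdf μ σ α y * Real.log (lsnpdf μ σ α y))
      (nhds 0)
      (nhds (((1 / 2) * Real.log (σ ^ 2) + (1 / 2) * (1 + Real.log (2 * π))) + μ)) := by
  have hInt : ∀ α : ℝ, (∫ y, lsnpdf μ σ α y * Real.log (lsnpdf μ σ α y))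
      = σ * ∫ t, hfun μ σ α t := by
    intro α
    have h1 : (fun y => lsnpdf μ σ α y * Real.log (lsnpdf μ σ α y))
        = fun y => if 0 < y then (fun u => hfun μ σ α ((u - μ) / σ)) (Real.log y) / y else 0 := by
      funext y; exact lsn_eq μ σ hσ α y
    rw [h1, integral_log_subst (fun u => hfun μ σ α ((u - μ) / σ)),
        integral_affine_subst (fun t => hfun μ σ α t) μ σ hσ]
  set c2 : ℝ := Real.log (Real.sqrt (2 * π)) with hc2
  set K : ℝ := |Real.log 2 - Real.log σ - μ| + 2 * c2 + 1/2 + (σ + 1)/2 with hK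
  set M : ℝ := 1 + (σ + 1)/2 with hM
  have hKnn : 0 ≤ K := by
    have := log_sqrt2pi_nonneg
    have := abs_nonneg (Real.log 2 - Real.log σ - μ)
    rw [hK, hc2]; linarith
  have key : Tendsto (fun α : ℝ => ∫ t, hfun μ σ α t) (nhds 0)
      (nhds (∫ t, hfun μ σ 0 t)) := by
    apply tendsto_integral_filter_of_dominated_convergence
      (bound := fun t => 2 / σ * stdphi t * (K + M * t ^ 2))
    · exact Eventually.of_forall fun α => (continuous_hfun μ σ α).aestronglyMeasurable
    · have hball : Metric.closedBall (0:ℝ) 1 ∈ nhds (0:ℝ) := Metric.closedBall_mem_nhds 0 one_pos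
      filter_upwards [hball] with α hα
      rw [Metric.mem_closedBall, Real.dist_eq, sub_zero] at hα
      refine Eventually.of_forall fun t => ?_
      set L : ℝ := Real.log 2 - Real.log σ - (μ + σ * t) + Real.log (stdphi t)
        + Real.log (stdPhi (α * t)) with hLdef
      have hφ := stdphi_pos t
      have hΦpos := stdPhi_pos (α * t)
      have hΦ1 := stdPhi_le_one (α * t)
      have hnorm : ‖hfun μ σ α t‖ = 2 / σ * stdphi t * stdPhi (α * t) * |L| := by
        rw [Real.norm_eq_abs]
        unfold hfun
        rw [← hLdef, abs_mul,
          abs_of_nonneg (mul_nonneg (mul_nonneg (by positivity) hφ.le) hΦpos.le)]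
      have hlogφ : |Real.log (stdphi t)| = c2 + t ^ 2 / 2 := by
        rw [log_stdphi, ← hc2, show -c2 - t ^ 2 / 2 = -(c2 + t ^ 2 / 2) by ring, abs_neg,
          abs_of_nonneg (by rw [hc2]; nlinarith [sq_nonneg t, log_sqrt2pi_nonneg])]
      have hlogΦ : |Real.log (stdPhi (α * t))| ≤ c2 + (|t| + 1) ^ 2 / 2 := by
        rw [abs_of_nonpos (Real.log_nonpos hΦpos.le hΦ1)]
        have h2 := neg_log_stdPhi_le (α * t)
        have hat : |α * t| ≤ |t| := by
          rw [abs_mul]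
          nlinarith [abs_nonneg t, abs_nonneg α]
        have h3 : (|α * t| + 1) ^ 2 ≤ (|t| + 1) ^ 2 := by
          nlinarith [abs_nonneg (α * t), abs_nonneg t]
        rw [← hc2] at h2
        linarith
      have hL : |L| ≤ K + M * t ^ 2 := by
        have ha1 := abs_add_le (Real.log 2 - Real.log σ - (μ + σ * t) + Real.log (stdphi t))
          (Real.log (stdPhi (α * t)))
        have ha2 := abs_add_le (Real.log 2 - Real.log σ - (μ + σ * t)) (Real.log (stdphi t))
        have ha3 : |Real.log 2 - Real.log σ - (μ + σ * t)|
            ≤ |Real.log 2 - Real.log σ - μ| + σ * |t| := by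
          have := abs_add_le (Real.log 2 - Real.log σ - μ) (-(σ * t))
          have habs : |(-(σ * t))| = σ * |t| := by
            rw [abs_neg, abs_mul, abs_of_pos hσ]
          have heq : Real.log 2 - Real.log σ - (μ + σ * t)
              = Real.log 2 - Real.log σ - μ + -(σ * t) := by ring
          rw [heq]
          linarith
        have hsum : |L| ≤ |Real.log 2 - Real.log σ - μ| + σ * |t| + (c2 + t ^ 2 / 2)
            + (c2 + (|t| + 1) ^ 2 / 2) := by
          rw [hLdef]
          rw [hlogφ] at ha2
          calc |Real.log 2 - Real.log σ - (μ + σ * t) + Real.log (stdphi t)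
              + Real.log (stdPhi (α * t))|
              ≤ |Real.log 2 - Real.log σ - (μ + σ * t) + Real.log (stdphi t)|
                + |Real.log (stdPhi (α * t))| := ha1
            _ ≤ _ := by linarith
        have hfin : |Real.log 2 - Real.log σ - μ| + σ * |t| + (c2 + t ^ 2 / 2)
            + (c2 + (|t| + 1) ^ 2 / 2) ≤ K + M * t ^ 2 := by
          rw [hK, hM]
          nlinarith [mul_nonneg (by linarith : (0:ℝ) ≤ σ + 1) (sq_nonneg (|t| - 1)),
            sq_abs t, abs_nonneg t]
        exact hsum.trans hfin
      rw [hnorm]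
      have e1 : 2 / σ * stdphi t * stdPhi (α * t) * |L| ≤ 2 / σ * stdphi t * 1 * |L| := by
        apply mul_le_mul_of_nonneg_right _ (abs_nonneg L)
        exact mul_le_mul_of_nonneg_left hΦ1 (by positivity)
      have e2 : 2 / σ * stdphi t * 1 * |L| ≤ 2 / σ * stdphi t * (K + M * t ^ 2) := by
        rw [mul_one]
        exact mul_le_mul_of_nonneg_left hL (by positivity)
      linarith
    · have hb : (fun t : ℝ => 2 / σ * stdphi t * (K + M * t ^ 2))
          = fun t : ℝ => (2 / σ * K) * stdphi t + (2 / σ * M) * (t ^ 2 * stdphi t) := by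
        funext t; ring
      rw [hb]
      exact (integrable_stdphi.const_mul _).add (integrable_sq_mul_stdphi.const_mul _)
    · refine Eventually.of_forall fun t => ?_
      have hΦc : ContinuousAt (fun α : ℝ => stdPhi (α * t)) 0 :=
        (continuous_stdPhi.comp (continuous_id.mul continuous_const)).continuousAt
      have hlogc : ContinuousAt (fun α : ℝ => Real.log (stdPhi (α * t))) 0 :=
        hΦc.log (stdPhi_pos _).ne'
      have hc : ContinuousAt (fun α : ℝ => hfun μ σ α t) 0 := by
        unfold hfun
        exact ((continuousAt_const.mul hΦc).mul (continuousAt_const.add hlogc))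
      exact hc.tendsto
  have h0fun : (fun t => hfun μ σ 0 t) = fun t =>
      ((-Real.log σ - μ - c2) / σ) * stdphi t
      + (-1 : ℝ) * (t * stdphi t) + (-(1 / (2 * σ))) * (t ^ 2 * stdphi t) := by
    funext t
    unfold hfun
    rw [zero_mul, stdPhi_zero, log_stdphi, ← hc2]
    rw [show Real.log (1/2 : ℝ) = -Real.log 2 by rw [one_div, Real.log_inv]]
    field_simp
    ring
  have hI0 : ∫ t, hfun μ σ 0 t = (-Real.log σ - μ - c2) / σ - 1 / (2 * σ) := by
    have i1 : Integrable (fun t : ℝ => (-Real.log σ - μ - c2) / σ * stdphi t) :=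
      integrable_stdphi.const_mul _
    have i2 : Integrable (fun t : ℝ => (-1 : ℝ) * (t * stdphi t)) :=
      integrable_id_mul_stdphi.const_mul _
    have i3 : Integrable (fun t : ℝ => -(1 / (2 * σ)) * (t ^ 2 * stdphi t)) :=
      integrable_sq_mul_stdphi.const_mul _
    have i12 : Integrable (fun t : ℝ => (-Real.log σ - μ - c2) / σ * stdphi t
        + (-1 : ℝ) * (t * stdphi t)) := i1.add i2
    rw [h0fun]
    rw [integral_add i12 i3, integral_add i1 i2,
      MeasureTheory.integral_const_mul, MeasureTheory.integral_const_mul,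
      MeasureTheory.integral_const_mul,
      integral_stdphi, integral_id_mul_stdphi, integral_sq_mul_stdphi]
    ring

  have heq : (fun α : ℝ => -∫ y, lsnpdf μ σ α y * Real.log (lsnpdf μ σ α y))
      = fun α : ℝ => -(σ * ∫ t, hfun μ σ α t) := by
    funext α; rw [hInt α]
  rw [heq]
  have hval : ((1/2) * Real.log (σ ^ 2) + (1/2) * (1 + Real.log (2 * π))) + μ
      = -(σ * ((-Real.log σ - μ - c2) / σ - 1 / (2 * σ))) := by
    rw [hc2, Real.log_sqrt (by positivity), show Real.log (σ ^ 2) = 2 * Real.log σ by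
      rw [show σ ^ 2 = σ * σ by ring, Real.log_mul hσ.ne' hσ.ne']; ring]
    field_simp
    ring
  rw [hval, ← hI0]
  exact (key.const_mul σ).neg
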